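/- For every natural number k ≥ 1, π/4 = 2·arctan(1/φ^{2k}) + arctan((−2 + (L_{2k} − 2)·φ^{2k})/(−2 + (L_{2k} + 2)·φ^{2k})). -/

import Mathlib

/-!
Put `t = φ ^ (2k)`. Since `ψ = -φ⁻¹`, Binet's formula for the Lucas numbers gives
`L (2k) = t + t⁻¹`, so the second argument is `(1 - 2x - x²) / (1 + 2x - x²)` with `x = 1/t ∈ (0, 1]`.
Writing `a = arctan x`, this quotient is `tan (π/4 - 2a)`: numerator and denominator are
`sin (π/4 - 2a)` and `cos (π/4 - 2a)` times the same positive factor `(√2/2) cos² a`. Positivity of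
`1 + 2x - x²` therefore puts `π/4 - 2a` in `(-π/2, π/2)`, where `arctan` inverts `tan`.
-/

open Real

/-- The Lucas numbers: `L 0 = 2`, `L 1 = 1`, `L (n+2) = L (n+1) + L n`. -/
def L : ℕ → ℝ
  | 0 => 2
  | 1 => 1
  | (n + 2) => L (n + 1) + L n

/-- The golden ratio `φ = (1 + √5)/2`. -/
noncomputable def phi : ℝ := (1 + Real.sqrt 5) / 2

open goldenRatio

namespace Real

theorem abs_lt_pi_div_two_of_cos_pos {θ : ℝ} (h : 0 < cos θ) (hθ : |θ| ≤ π + π / 2) :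
    |θ| < π / 2 := by
  by_contra! hle
  have := cos_nonpos_of_pi_div_two_le_of_le hle hθ
  rw [cos_abs] at this
  linarith

theorem arctan_eq_pi_div_four_sub_two_mul_arctan {x : ℝ} (hx : 0 < 1 + 2 * x - x ^ 2) :
    arctan ((1 - 2 * x - x ^ 2) / (1 + 2 * x - x ^ 2)) = π / 4 - 2 * arctan x := by
  set a := arctan x
  have hcos : 0 < cos a := cos_arctan_pos x
  have hsin : sin a = x * cos a := by
    rw [← tan_arctan x, tan_eq_sin_div_cos, div_mul_cancel₀ _ hcos.ne']
  have hpyth : (x * cos a) ^ 2 + cos a ^ 2 = 1 := hsin ▸ sin_sq_add_cos_sq a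
  have hcosθ : cos (π / 4 - 2 * a) = √2 / 2 * cos a ^ 2 * (1 + 2 * x - x ^ 2) := by
    rw [cos_sub, cos_pi_div_four, sin_pi_div_four, cos_two_mul, sin_two_mul, hsin]
    linear_combination (√2 / 2) * hpyth
  have hsinθ : sin (π / 4 - 2 * a) = √2 / 2 * cos a ^ 2 * (1 - 2 * x - x ^ 2) := by
    rw [sin_sub, cos_pi_div_four, sin_pi_div_four, cos_two_mul, sin_two_mul, hsin]
    linear_combination (√2 / 2) * hpyth
  have hcosθ_pos : 0 < cos (π / 4 - 2 * a) := by rw [hcosθ]; positivity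
  refine arctan_eq_of_tan_eq ?_ (abs_lt.mp (abs_lt_pi_div_two_of_cos_pos hcosθ_pos ?_))
  · rw [tan_eq_sin_div_cos, hsinθ, hcosθ, mul_div_mul_left _ _ (by positivity)]
  · have := neg_pi_div_two_lt_arctan x
    have := arctan_lt_pi_div_two x
    rw [abs_le]; constructor <;> linarith [pi_pos]

end Real

theorem L_eq_goldenRatio_pow_add_goldenConj_pow : ∀ n, L n = φ ^ n + ψ ^ n
  | 0 => by norm_num [L]
  | 1 => by simp [L]
  | n + 2 => by
    rw [L, L_eq_goldenRatio_pow_add_goldenConj_pow (n + 1),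
      L_eq_goldenRatio_pow_add_goldenConj_pow n]
    linear_combination -φ ^ n * goldenRatio_sq - ψ ^ n * goldenConj_sq

theorem L_two_mul (k : ℕ) : L (2 * k) = φ ^ (2 * k) + (φ ^ (2 * k))⁻¹ := by
  rw [L_eq_goldenRatio_pow_add_goldenConj_pow, ← inv_pow, inv_goldenRatio, (even_two_mul k).neg_pow]

theorem pi_four_eq_arctan_phi_even_general (k : ℕ) :
    π / 4 = 2 * arctan (1 / phi ^ (2 * k)) +
      arctan ((-2 + (L (2 * k) - 2) * phi ^ (2 * k)) /
        (-2 + (L (2 * k) + 2) * phi ^ (2 * k))) := by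
  rw [show phi = φ from rfl, L_two_mul]
  set t := φ ^ (2 * k)
  have ht : 1 ≤ t := one_le_pow₀ one_lt_goldenRatio.le
  have hx₀ : 0 < 1 / t := by positivity
  have hx₁ : 1 / t ≤ 1 := div_le_one_of_le₀ ht (by positivity)
  have hx : 0 < 1 + 2 * (1 / t) - (1 / t) ^ 2 := by nlinarith
  have harg : (-2 + (t + t⁻¹ - 2) * t) / (-2 + (t + t⁻¹ + 2) * t)
      = (1 - 2 * (1 / t) - (1 / t) ^ 2) / (1 + 2 * (1 / t) - (1 / t) ^ 2) := by
    field_simp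
    ring
  rw [harg, arctan_eq_pi_div_four_sub_two_mul_arctan hx]
  ring

theorem pi_four_eq_arctan_phi_even (k : ℕ) (hk : 1 ≤ k) :
    π / 4 = 2 * arctan (1 / phi ^ (2 * k)) +
      arctan ((-2 + (L (2 * k) - 2) * phi ^ (2 * k)) /
        (-2 + (L (2 * k) + 2) * phi ^ (2 * k))) :=
  pi_four_eq_arctan_phi_even_general k
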